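/- arXiv:1109.5061 — 3 statements merged into one kernel-verified Lean document; each statement's English description precedes it below -/
import Mathlib

section
/- Let x = (x_0, w) be a possibly maximal μ-admissible pair with p-rank d(x) = d. Then ℓ(x) ≤ ⌊(g² + d)/2⌋. -/
/-!
Write `τ = w⁻¹` and `S = {i ≤ g | τ i ≤ g}`. Possible maximality forces `τ i = 2g+1-i` for the
other `i ≤ g`, so `τ` permutes `S`, and the Iwahori–Matsumoto formula gives
`ℓ(x) ≤ C(g,2) + #S + #bad - #good`, where `bad`/`good` are the inversions `(i, j)` of `τ` on `S`
with `(x₀ i, x₀ j) ≠ (0, 1)`, resp. `= (0, 1)`. As `x₀` is `0` at points moved up and `1` at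
points moved down, it suffices to show `2·#bad + #{i ∈ S | τ i ≠ i} ≤ 2·#good` for a permutation
`π` of a finite chain. This rests on the balance `#{i ≤ k < π i} = #{π i ≤ k < i}`. At a fixed
point `f` it matches the inversions `(i, f)` with the inversions `(f, j)`, one family bad and the
other good. At a point `u` moved up, with `a` up–up inversions ending at `u`, it gives
`a + 1 ≤ #{v > u | π v ≤ u}` (take `k = u`) and `a ≤ #{v > π u | π v < π u}` (take `k = π u`);
both count up–down inversions starting at `u`, and together with the order-dual bounds at points
moved down every up–down inversion is counted at most twice.
-/

/-- A μ-admissible pair for `GSp_{2g}`: a permutation `w` of `{1,…,2g}`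
(encoded as a permutation of `ℕ` fixing everything outside `[1, 2g]`)
satisfying `w(2g+1−i) = 2g+1−w(i)`, together with a vector
`x_0 ∈ {0,1}^{2g}` (encoded as a function `ℕ → ℤ`, zero outside `[1, 2g]`)
with `x_0(i) + x_0(2g+1−i) = 1`, `x_0(i) = 0` when `w⁻¹(i) > i`
and `x_0(i) = 1` when `w⁻¹(i) < i`. -/
structure AdmPair (g : ℕ) where
  w : Equiv.Perm ℕ
  x0 : ℕ → ℤ
  w_fix : ∀ i : ℕ, i ∉ Finset.Icc 1 (2*g) → w i = i
  w_symm : ∀ i ∈ Finset.Icc 1 (2*g), w (2*g+1-i) = 2*g+1 - w i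
  x0_mem : ∀ i ∈ Finset.Icc 1 (2*g), x0 i = 0 ∨ x0 i = 1
  x0_out : ∀ i : ℕ, i ∉ Finset.Icc 1 (2*g) → x0 i = 0
  x0_sum : ∀ i ∈ Finset.Icc 1 (2*g), x0 i + x0 (2*g+1-i) = 1
  x0_gt : ∀ i ∈ Finset.Icc 1 (2*g), i < w.symm i → x0 i = 0
  x0_lt : ∀ i ∈ Finset.Icc 1 (2*g), w.symm i < i → x0 i = 1

namespace AdmPair

variable {g : ℕ}

/-- The length of a μ-admissible pair, by the Iwahori–Matsumoto formula. -/
def len (x : AdmPair g) : ℤ :=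
  (∑ i ∈ Finset.Icc 1 g, ∑ j ∈ Finset.Icc 1 g,
      if i < j then
        (if x.w.symm i < x.w.symm j then |x.x0 i - x.x0 j|
         else |x.x0 i - x.x0 j + 1|)
      else 0)
  + (∑ i ∈ Finset.Icc 1 g, ∑ j ∈ Finset.Icc 1 g,
      if i < j then
        (if x.w.symm i < x.w.symm (2*g+1-j) then |x.x0 i + x.x0 j - 1|
         else |x.x0 i + x.x0 j|)
      else 0)
  + (∑ i ∈ Finset.Icc 1 g,
      if x.w.symm i < x.w.symm (2*g+1-i) then |2 * x.x0 i - 1|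
      else |2 * x.x0 i|)

/-- The p-rank of a μ-admissible pair: the number of fixed points of `w`
in `{1,…,g}`. -/
def prank (x : AdmPair g) : ℕ :=
  ((Finset.Icc 1 g).filter (fun i => x.w i = i)).card

/-- `x` is possibly maximal if `w(i) = 2g+1−i` whenever `i ∈ {1,…,g}` and
`w(i) > g`. -/
def PossiblyMaximal (x : AdmPair g) : Prop :=
  ∀ i ∈ Finset.Icc 1 g, g < x.w i → x.w i = 2*g+1-i

end AdmPair

/-- `IsAssocPerm g x σ` : `σ` is the associated permutation of `{1,…,g}`
of the μ-admissible pair `x`, encoded as a permutation of `ℕ` fixing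
everything outside `[1, g]` and given on `[1, g]` by
`σ(i) = w(i)` if `w(i) ≤ g` and `σ(i) = 2g+1−w(i)` otherwise. -/
def IsAssocPerm (g : ℕ) (x : AdmPair g) (σ : Equiv.Perm ℕ) : Prop :=
  (∀ i : ℕ, i ∉ Finset.Icc 1 g → σ i = i) ∧
  (∀ i ∈ Finset.Icc 1 g, σ i = if x.w i ≤ g then x.w i else 2*g+1 - x.w i)

/-- `A_σ = #{(i,j) ∈ {1,…,g}² : i < j < σ(j) < σ(i)}`. -/
def permA (g : ℕ) (σ : Equiv.Perm ℕ) : ℕ :=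
  (((Finset.Icc 1 g) ×ˢ (Finset.Icc 1 g)).filter
    (fun p => p.1 < p.2 ∧ p.2 < σ p.2 ∧ σ p.2 < σ p.1)).card

/-- `B_σ = #{(i,j) ∈ {1,…,g}² : i < j = σ(j) < σ(i)}`. -/
def permB (g : ℕ) (σ : Equiv.Perm ℕ) : ℕ :=
  (((Finset.Icc 1 g) ×ˢ (Finset.Icc 1 g)).filter
    (fun p => p.1 < p.2 ∧ σ p.2 = p.2 ∧ p.2 < σ p.1)).card

/-- `C_σ = #{(i,j) ∈ {1,…,g}² : i < j < σ(i) < σ(j)}`. -/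
def permC (g : ℕ) (σ : Equiv.Perm ℕ) : ℕ :=
  (((Finset.Icc 1 g) ×ˢ (Finset.Icc 1 g)).filter
    (fun p => p.1 < p.2 ∧ p.2 < σ p.1 ∧ σ p.1 < σ p.2)).card

/-- The number of inversions of `σ` on `{1,…,g}` (its Coxeter length). -/
def permLen (g : ℕ) (σ : Equiv.Perm ℕ) : ℕ :=
  (((Finset.Icc 1 g) ×ˢ (Finset.Icc 1 g)).filter
    (fun p => p.1 < p.2 ∧ σ p.2 < σ p.1)).card

/-- The number of fixed points of `σ` in `{1,…,g}`. -/
def permFix (g : ℕ) (σ : Equiv.Perm ℕ) : ℕ :=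
  ((Finset.Icc 1 g).filter (fun i => σ i = i)).card

open Finset

namespace Finset

variable {α β : Type*} {s : Finset α} {t : Finset β}

theorem card_filter_product_eq_sum_fst (P : α × β → Prop) [DecidablePred P] :
    #{p ∈ s ×ˢ t | P p} = ∑ i ∈ s, #{j ∈ t | P (i, j)} := by
  simp only [card_filter, sum_product]

theorem card_filter_product_eq_sum_snd (P : α × β → Prop) [DecidablePred P] :
    #{p ∈ s ×ˢ t | P p} = ∑ j ∈ t, #{i ∈ s | P (i, j)} := by
  simp only [card_filter, sum_product_right]

end Finset

namespace Equiv.Perm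

variable {α : Type*} [LinearOrder α] {s : Finset α} {π : Perm α}

theorem card_filter_apply_eq (hπ : ∀ i ∈ s, π i ∈ s) (p : α → Prop) [DecidablePred p] :
    #{i ∈ s | p (π i)} = #{i ∈ s | p i} := by
  have hs : s.image π = s :=
    eq_of_subset_of_card_le (image_subset_iff.2 hπ) (card_image_of_injective s π.injective).ge
  conv_rhs => rw [← hs, filter_image, card_image_of_injective _ π.injective]

theorem card_up_across_eq_card_down_across (hπ : ∀ i ∈ s, π i ∈ s) (k : α) :
    #{i ∈ s | i ≤ k ∧ k < π i} = #{i ∈ s | k < i ∧ π i ≤ k} := by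
  have hcount := card_filter_apply_eq hπ (· ≤ k)
  have hsplit : #{i ∈ s | i ≤ k ∧ k < π i} + #{i ∈ s | π i ≤ k}
      = #{i ∈ s | k < i ∧ π i ≤ k} + #{i ∈ s | i ≤ k} := by
    simp only [card_filter, ← sum_add_distrib]
    refine sum_congr rfl fun i _ => ?_
    split_ifs <;> grind
  omega

theorem card_across_fixed_eq (hπ : ∀ i ∈ s, π i ∈ s) {f : α} (hf : π f = f) :
    #{i ∈ s | i < f ∧ f < π i} = #{j ∈ s | f < j ∧ π j < f} := by
  have h := card_up_across_eq_card_down_across hπ f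
  convert h using 3 with i _ j _
  · grind
  · grind [π.injective.eq_iff]

theorem card_inv_fixed_fst_eq_snd (hπ : ∀ i ∈ s, π i ∈ s) (P : α → Prop) [DecidablePred P] :
    #{p ∈ s ×ˢ s | (π p.1 = p.1 ∧ P p.1) ∧ (p.1 < p.2 ∧ π p.2 < π p.1)}
      = #{p ∈ s ×ˢ s | (π p.2 = p.2 ∧ P p.2) ∧ (p.1 < p.2 ∧ π p.2 < π p.1)} := by
  rw [card_filter_product_eq_sum_fst, card_filter_product_eq_sum_snd]
  refine sum_congr rfl fun f _ => ?_
  by_cases hf : π f = f ∧ P f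
  · simp only [hf, true_and]
    exact (card_across_fixed_eq hπ hf.1).symm
  · simp [hf]

variable {u : α}

theorem card_inv_left_add_one_le (hπ : ∀ i ∈ s, π i ∈ s) (hu : u ∈ s) (hup : u < π u) :
    #{i ∈ s | i < u ∧ π u < π i} + 1 ≤ #{v ∈ s | u < v ∧ π v ≤ u} := by
  calc #{i ∈ s | i < u ∧ π u < π i} + 1 = #(insert u {i ∈ s | i < u ∧ π u < π i}) :=
        (card_insert_of_notMem (by simp)).symm
    _ ≤ #{i ∈ s | i ≤ u ∧ u < π i} :=
        card_le_card fun i => by simp only [mem_insert, mem_filter]; grind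
    _ = _ := card_up_across_eq_card_down_across hπ u

theorem card_inv_left_le (hπ : ∀ i ∈ s, π i ∈ s) (hup : u < π u) :
    #{i ∈ s | i < u ∧ π u < π i} ≤ #{v ∈ s | π u < v ∧ π v < π u} := by
  calc #{i ∈ s | i < u ∧ π u < π i} ≤ #{i ∈ s | i ≤ π u ∧ π u < π i} :=
        card_le_card fun i => by simp only [mem_filter]; grind
    _ = #{v ∈ s | π u < v ∧ π v ≤ π u} := card_up_across_eq_card_down_across hπ (π u)
    _ ≤ _ := card_le_card fun v => by simp only [mem_filter]; grind [π.injective.eq_iff]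

theorem card_inv_right_add_one_le (hπ : ∀ i ∈ s, π i ∈ s) (hu : u ∈ s) (hdown : π u < u) :
    #{j ∈ s | u < j ∧ π j < π u} + 1 ≤ #{v ∈ s | v < u ∧ u ≤ π v} :=
  card_inv_left_add_one_le (α := αᵒᵈ) hπ hu hdown

theorem card_inv_right_le (hπ : ∀ i ∈ s, π i ∈ s) (hdown : π u < u) :
    #{j ∈ s | u < j ∧ π j < π u} ≤ #{v ∈ s | v < π u ∧ π u < π v} :=
  card_inv_left_le (α := αᵒᵈ) hπ hdown

theorem two_mul_card_inv_up_add_card_up_le (hπ : ∀ i ∈ s, π i ∈ s) :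
    2 * #{p ∈ s ×ˢ s | p.2 < π p.2 ∧ (p.1 < p.2 ∧ π p.2 < π p.1)} + #{i ∈ s | i < π i}
      ≤ #{p ∈ s ×ˢ s | p.1 < π p.1 ∧ (p.1 < p.2 ∧ π p.2 ≤ p.1)}
        + #{p ∈ s ×ˢ s | p.1 < π p.1 ∧ (π p.1 < p.2 ∧ π p.2 < π p.1)} := by
  rw [card_filter_product_eq_sum_snd, card_filter_product_eq_sum_fst,
    card_filter_product_eq_sum_fst, card_filter, mul_sum, ← sum_add_distrib, ← sum_add_distrib]
  refine sum_le_sum fun u hu => ?_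
  by_cases hup : u < π u
  · have h₁ := card_inv_left_add_one_le hπ hu hup
    have h₂ := card_inv_left_le hπ hup
    simp only [hup, true_and, if_true]
    omega
  · simp [hup]

theorem two_mul_card_inv_down_add_card_down_le (hπ : ∀ i ∈ s, π i ∈ s) :
    2 * #{p ∈ s ×ˢ s | π p.1 < p.1 ∧ (p.1 < p.2 ∧ π p.2 < π p.1)} + #{i ∈ s | π i < i}
      ≤ #{p ∈ s ×ˢ s | π p.2 < p.2 ∧ (p.1 < p.2 ∧ p.2 ≤ π p.1)}
        + #{p ∈ s ×ˢ s | π p.2 < p.2 ∧ (p.1 < π p.2 ∧ π p.2 < π p.1)} := by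
  rw [card_filter_product_eq_sum_fst, card_filter_product_eq_sum_snd,
    card_filter_product_eq_sum_snd, card_filter, mul_sum, ← sum_add_distrib, ← sum_add_distrib]
  refine sum_le_sum fun u hu => ?_
  by_cases hdown : π u < u
  · have h₁ := card_inv_right_add_one_le hπ hu hdown
    have h₂ := card_inv_right_le hπ hdown
    simp only [hdown, true_and, if_true]
    omega
  · simp [hdown]

theorem two_mul_card_inv_add_card_moved_le (hπ : ∀ i ∈ s, π i ∈ s) :
    2 * #{p ∈ s ×ˢ s | p.2 < π p.2 ∧ (p.1 < p.2 ∧ π p.2 < π p.1)}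
      + 2 * #{p ∈ s ×ˢ s | π p.1 < p.1 ∧ (p.1 < p.2 ∧ π p.2 < π p.1)}
      + #{i ∈ s | i < π i} + #{i ∈ s | π i < i}
      ≤ 2 * #{p ∈ s ×ˢ s | (p.1 < p.2 ∧ π p.2 < π p.1) ∧ p.1 < π p.1 ∧ π p.2 < p.2} := by
  have hup := two_mul_card_inv_up_add_card_up_le hπ
  have hdown := two_mul_card_inv_down_add_card_down_le hπ
  have hsplit₁ : #{p ∈ s ×ˢ s | p.1 < π p.1 ∧ (p.1 < p.2 ∧ π p.2 ≤ p.1)}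
      + #{p ∈ s ×ˢ s | π p.2 < p.2 ∧ (p.1 < π p.2 ∧ π p.2 < π p.1)}
      ≤ #{p ∈ s ×ˢ s | (p.1 < p.2 ∧ π p.2 < π p.1) ∧ p.1 < π p.1 ∧ π p.2 < p.2} := by
    simp only [card_filter, ← sum_add_distrib]
    exact sum_le_sum fun p _ => by split_ifs <;> grind
  have hsplit₂ : #{p ∈ s ×ˢ s | π p.2 < p.2 ∧ (p.1 < p.2 ∧ p.2 ≤ π p.1)}
      + #{p ∈ s ×ˢ s | p.1 < π p.1 ∧ (π p.1 < p.2 ∧ π p.2 < π p.1)}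
      ≤ #{p ∈ s ×ˢ s | (p.1 < p.2 ∧ π p.2 < π p.1) ∧ p.1 < π p.1 ∧ π p.2 < p.2} := by
    simp only [card_filter, ← sum_add_distrib]
    exact sum_le_sum fun p _ => by split_ifs <;> grind
  omega

variable (low : α → Prop) [DecidablePred low]

theorem card_inv_not_low_high_le (hup : ∀ i ∈ s, i < π i → low i)
    (hdown : ∀ i ∈ s, π i < i → ¬low i) :
    #{p ∈ s ×ˢ s | (p.1 < p.2 ∧ π p.2 < π p.1) ∧ ¬(low p.1 ∧ ¬low p.2)}
      ≤ #{p ∈ s ×ˢ s | p.2 < π p.2 ∧ (p.1 < p.2 ∧ π p.2 < π p.1)}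
        + #{p ∈ s ×ˢ s | π p.1 < p.1 ∧ (p.1 < p.2 ∧ π p.2 < π p.1)}
        + #{p ∈ s ×ˢ s | (π p.1 = p.1 ∧ ¬low p.1) ∧ (p.1 < p.2 ∧ π p.2 < π p.1)}
        + #{p ∈ s ×ˢ s | (π p.2 = p.2 ∧ low p.2) ∧ (p.1 < p.2 ∧ π p.2 < π p.1)} := by
  simp only [card_filter, ← sum_add_distrib]
  refine sum_le_sum fun p hp => ?_
  rw [mem_product] at hp
  have := hup _ hp.1; have := hup _ hp.2; have := hdown _ hp.1; have := hdown _ hp.2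
  split_ifs <;> grind

theorem card_inv_low_high_ge (hup : ∀ i ∈ s, i < π i → low i)
    (hdown : ∀ i ∈ s, π i < i → ¬low i) :
    #{p ∈ s ×ˢ s | (p.1 < p.2 ∧ π p.2 < π p.1) ∧ p.1 < π p.1 ∧ π p.2 < p.2}
        + #{p ∈ s ×ˢ s | (π p.1 = p.1 ∧ low p.1) ∧ (p.1 < p.2 ∧ π p.2 < π p.1)}
        + #{p ∈ s ×ˢ s | (π p.2 = p.2 ∧ ¬low p.2) ∧ (p.1 < p.2 ∧ π p.2 < π p.1)}
      ≤ #{p ∈ s ×ˢ s | (p.1 < p.2 ∧ π p.2 < π p.1) ∧ low p.1 ∧ ¬low p.2} := by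
  simp only [card_filter, ← sum_add_distrib]
  refine sum_le_sum fun p hp => ?_
  rw [mem_product] at hp
  have := hup _ hp.1; have := hdown _ hp.2
  split_ifs <;> grind

theorem two_mul_card_inv_not_low_high_add_card_ne_le (hπ : ∀ i ∈ s, π i ∈ s)
    (hup : ∀ i ∈ s, i < π i → low i) (hdown : ∀ i ∈ s, π i < i → ¬low i) :
    2 * #{p ∈ s ×ˢ s | (p.1 < p.2 ∧ π p.2 < π p.1) ∧ ¬(low p.1 ∧ ¬low p.2)}
      + #{i ∈ s | π i ≠ i}
      ≤ 2 * #{p ∈ s ×ˢ s | (p.1 < p.2 ∧ π p.2 < π p.1) ∧ low p.1 ∧ ¬low p.2} := by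
  have hmoved : #{i ∈ s | π i ≠ i} = #{i ∈ s | i < π i} + #{i ∈ s | π i < i} := by
    simp only [card_filter, ← sum_add_distrib]
    exact sum_congr rfl fun i _ => by split_ifs <;> grind
  have hcore := two_mul_card_inv_add_card_moved_le hπ
  have hbad := card_inv_not_low_high_le low hup hdown
  have hgood := card_inv_low_high_ge low hup hdown
  have hlow := card_inv_fixed_fst_eq_snd hπ low
  have hhigh := card_inv_fixed_fst_eq_snd hπ fun i => ¬low i
  omega

end Equiv.Perm

namespace AdmPair

variable {g : ℕ} (x : AdmPair g)

theorem symm_mem_Icc {i : ℕ} (hi : i ∈ Icc 1 (2 * g)) : x.w.symm i ∈ Icc 1 (2 * g) := by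
  by_contra h
  have hfix := x.w_fix _ h
  rw [Equiv.apply_symm_apply] at hfix
  exact h (hfix ▸ hi)

theorem symm_two_mul_add_one_sub {i : ℕ} (hi : i ∈ Icc 1 (2 * g)) :
    x.w.symm (2 * g + 1 - i) = 2 * g + 1 - x.w.symm i := by
  rw [Equiv.symm_apply_eq, x.w_symm _ (x.symm_mem_Icc hi), Equiv.apply_symm_apply]

def stableHalf : Finset ℕ := {i ∈ Icc 1 g | x.w.symm i ≤ g}

theorem stableHalf_subset_Icc : x.stableHalf ⊆ Icc 1 (2 * g) :=
  (filter_subset _ _).trans (Icc_subset_Icc_right (by omega))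

theorem card_stableHalf_le : #x.stableHalf ≤ g :=
  (card_filter_le _ _).trans (by simp)

theorem prank_eq_card_fixed : x.prank = #{i ∈ x.stableHalf | x.w.symm i = i} := by
  rw [prank, stableHalf, filter_filter]
  refine congrArg card (filter_congr fun i hi => ?_)
  have := mem_Icc.1 hi
  rw [Equiv.symm_apply_eq]
  grind

variable {x}

theorem PossiblyMaximal.symm_eq_of_lt (hx : x.PossiblyMaximal) {i : ℕ} (hi : i ∈ Icc 1 g)
    (h : g < x.w.symm i) : x.w.symm i = 2 * g + 1 - i := by
  have hi' := mem_Icc.1 hi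
  have hk := mem_Icc.1 (x.symm_mem_Icc (i := i) (by simp only [mem_Icc]; omega))
  have hw := x.w_symm _ (mem_Icc.2 hk)
  rw [Equiv.apply_symm_apply] at hw
  have := hx (2 * g + 1 - x.w.symm i) (by simp only [mem_Icc]; omega) (by omega)
  omega

theorem PossiblyMaximal.symm_mem_stableHalf (hx : x.PossiblyMaximal) {i : ℕ}
    (hi : i ∈ x.stableHalf) : x.w.symm i ∈ x.stableHalf := by
  simp only [stableHalf, mem_filter, mem_Icc] at hi ⊢
  have hj := mem_Icc.1 (x.symm_mem_Icc (i := i) (by simp only [mem_Icc]; omega))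
  refine ⟨⟨hj.1, hi.2⟩, not_lt.1 fun h => ?_⟩
  have h₁ := hx.symm_eq_of_lt (mem_Icc.2 ⟨hj.1, hi.2⟩) h
  have h₂ := x.symm_two_mul_add_one_sub (i := x.w.symm i) (by simp only [mem_Icc]; omega)
  have h₃ : x.w.symm (2 * g + 1 - x.w.symm i) = x.w.symm i := by rw [h₂, h₁]; omega
  have := x.w.symm.injective h₃
  omega

/-- On `stableHalf` the pair term is `1`, except at an inversion of `w⁻¹`, where it is `0` if
`(x₀ i, x₀ j) = (0, 1)` and `2` otherwise; a pair meeting the complement contributes at most `1`. -/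
theorem PossiblyMaximal.pairTerm_le (hx : x.PossiblyMaximal) {i j : ℕ} (hi : i ∈ Icc 1 g)
    (hj : j ∈ Icc 1 g) :
    (if i < j then
        (if x.w.symm i < x.w.symm j then |x.x0 i - x.x0 j| else |x.x0 i - x.x0 j + 1|)
      else 0)
      + (if i < j then
        (if x.w.symm i < x.w.symm (2 * g + 1 - j) then |x.x0 i + x.x0 j - 1|
         else |x.x0 i + x.x0 j|)
      else 0)
    ≤ (if i < j then 1 else 0)
      + (if (x.w.symm i ≤ g ∧ x.w.symm j ≤ g) ∧
          ((i < j ∧ x.w.symm j < x.w.symm i) ∧ ¬(x.x0 i = 0 ∧ ¬x.x0 j = 0)) then 1 else 0)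
      - (if (x.w.symm i ≤ g ∧ x.w.symm j ≤ g) ∧
          ((i < j ∧ x.w.symm j < x.w.symm i) ∧ (x.x0 i = 0 ∧ ¬x.x0 j = 0)) then 1 else 0) := by
  by_cases hij : i < j
  swap
  · simp [hij]
  have hi₂ : i ∈ Icc 1 (2 * g) := Icc_subset_Icc_right (by omega) hi
  have hj₂ : j ∈ Icc 1 (2 * g) := Icc_subset_Icc_right (by omega) hj
  have := mem_Icc.1 hi; have := mem_Icc.1 hj
  have := mem_Icc.1 (x.symm_mem_Icc hi₂); have := mem_Icc.1 (x.symm_mem_Icc hj₂)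
  have hne : x.w.symm i ≠ x.w.symm j := x.w.symm.injective.ne (by omega)
  have hne' : x.w.symm i ≠ x.w.symm (2 * g + 1 - j) := x.w.symm.injective.ne (by omega)
  rw [x.symm_two_mul_add_one_sub hj₂] at hne' ⊢
  have := hx.symm_eq_of_lt hi; have := hx.symm_eq_of_lt hj
  have := x.x0_gt i hi₂; have := x.x0_gt j hj₂; have := x.x0_lt i hi₂; have := x.x0_lt j hj₂
  rcases x.x0_mem i hi₂ with ha | ha <;> rcases x.x0_mem j hj₂ with hb | hb <;>
    rw [ha, hb] <;> split_ifs <;> norm_num <;> omega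

theorem PossiblyMaximal.diagTerm_le (hx : x.PossiblyMaximal) {i : ℕ} (hi : i ∈ Icc 1 g) :
    (if x.w.symm i < x.w.symm (2 * g + 1 - i) then |2 * x.x0 i - 1| else |2 * x.x0 i|)
      ≤ if x.w.symm i ≤ g then 1 else 0 := by
  have hi₂ : i ∈ Icc 1 (2 * g) := Icc_subset_Icc_right (by omega) hi
  have := mem_Icc.1 hi
  have := mem_Icc.1 (x.symm_mem_Icc hi₂)
  have := hx.symm_eq_of_lt hi
  have := x.x0_gt i hi₂
  rw [x.symm_two_mul_add_one_sub hi₂]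
  rcases x.x0_mem i hi₂ with ha | ha <;> rw [ha] <;> split_ifs <;> norm_num <;> omega

theorem PossiblyMaximal.len_le (hx : x.PossiblyMaximal) :
    x.len ≤ (g.choose 2 : ℤ)
      + #{p ∈ x.stableHalf ×ˢ x.stableHalf | (p.1 < p.2 ∧ x.w.symm p.2 < x.w.symm p.1)
          ∧ ¬(x.x0 p.1 = 0 ∧ ¬x.x0 p.2 = 0)}
      - #{p ∈ x.stableHalf ×ˢ x.stableHalf | (p.1 < p.2 ∧ x.w.symm p.2 < x.w.symm p.1)
          ∧ (x.x0 p.1 = 0 ∧ ¬x.x0 p.2 = 0)}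
      + #x.stableHalf := by
  have hstable (P : ℕ × ℕ → Prop) [DecidablePred P] :
      (#{p ∈ x.stableHalf ×ˢ x.stableHalf | P p} : ℤ) = ∑ i ∈ Icc 1 g, ∑ j ∈ Icc 1 g,
        if (x.w.symm i ≤ g ∧ x.w.symm j ≤ g) ∧ P (i, j) then 1 else 0 := by
    rw [stableHalf, ← filter_product, filter_filter, natCast_card_filter, sum_product]
  have hpairs : (g.choose 2 : ℤ) = ∑ i ∈ Icc 1 g, ∑ j ∈ Icc 1 g, if i < j then 1 else 0 := by
    have h := card_product_filter_lt (s := Icc 1 g)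
    rw [Nat.card_Icc, Nat.add_sub_cancel] at h
    rw [← h, natCast_card_filter, sum_product]
  rw [hpairs, hstable, hstable, ← sum_add_distrib, ← sum_sub_distrib, len]
  refine add_le_add ?_ ?_
  · rw [← sum_add_distrib]
    refine sum_le_sum fun i hi => ?_
    rw [← sum_add_distrib, ← sum_add_distrib, ← sum_sub_distrib]
    exact sum_le_sum fun j hj => hx.pairTerm_le hi hj
  · rw [stableHalf, natCast_card_filter]
    exact sum_le_sum fun i hi => hx.diagTerm_le hi

end AdmPair

theorem len_le_of_possiblyMaximal_general (g : ℕ) (x : AdmPair g)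
    (hx : x.PossiblyMaximal) :
    x.len ≤ ((g : ℤ)^2 + (x.prank : ℤ)) / 2 := by
  rw [Int.le_ediv_iff_mul_le two_pos]
  have hmem := x.stableHalf_subset_Icc
  have hinv := Equiv.Perm.two_mul_card_inv_not_low_high_add_card_ne_le (fun i => x.x0 i = 0)
    (fun _ hi => hx.symm_mem_stableHalf hi) (fun i hi => x.x0_gt i (hmem hi))
    (fun i hi h => by rw [x.x0_lt i (hmem hi) h]; exact one_ne_zero)
  have hlen := hx.len_le
  have hsplit := card_filter_add_card_filter_not (s := x.stableHalf) fun i => x.w.symm i = i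
  have hS := x.card_stableHalf_le
  have hprank := x.prank_eq_card_fixed
  have hchoose : 2 * g.choose 2 + g = g ^ 2 := by
    rw [Nat.choose_two_right, Nat.mul_div_cancel' (Nat.even_mul_pred_self g).two_dvd, sq]
    cases g <;> grind
  simp only [← ne_eq] at hsplit
  rw [← Nat.cast_pow, ← hchoose, hprank]
  omega

/-- A possibly maximal μ-admissible pair `x` of p-rank `d`
satisfies `ℓ(x) ≤ ⌊(g² + d)/2⌋`. -/
theorem len_le_of_possiblyMaximal (g : ℕ) (hg : 1 ≤ g) (x : AdmPair g)
    (hx : x.PossiblyMaximal) :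
    x.len ≤ ((g : ℤ)^2 + (x.prank : ℤ)) / 2 :=
  len_le_of_possiblyMaximal_general g x hx
end

section
/- For every positive integer g and every permutation σ of {1,…,g}, ℓ(σ) = 2·(A_σ + A_{σ⁻¹} + B_σ) + C_σ + C_{σ⁻¹} + #{i ∈ {1,…,g} : i < σ(i)} + #{i ∈ {1,…,g} : σ(σ(i)) < σ(i) < i}. -/
/-- `A_σ = #{(i,j) : i < j < σ(j) < σ(i)}` for a permutation `σ` of `Fin n`
(encoding a permutation of `{1,…,n}`). -/
def Acnt {n : ℕ} (σ : Equiv.Perm (Fin n)) : ℕ :=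
  (Finset.univ.filter (fun p : Fin n × Fin n =>
    p.1 < p.2 ∧ p.2 < σ p.2 ∧ σ p.2 < σ p.1)).card

/-- `B_σ = #{(i,j) : i < j = σ(j) < σ(i)}`. -/
def Bcnt {n : ℕ} (σ : Equiv.Perm (Fin n)) : ℕ :=
  (Finset.univ.filter (fun p : Fin n × Fin n =>
    p.1 < p.2 ∧ σ p.2 = p.2 ∧ p.2 < σ p.1)).card

/-- `C_σ = #{(i,j) : i < j < σ(i) < σ(j)}`. -/
def Ccnt {n : ℕ} (σ : Equiv.Perm (Fin n)) : ℕ :=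
  (Finset.univ.filter (fun p : Fin n × Fin n =>
    p.1 < p.2 ∧ p.2 < σ p.1 ∧ σ p.1 < σ p.2)).card

/-- The number of inversions of `σ` (its Coxeter length in `S_n`). -/
def invCnt {n : ℕ} (σ : Equiv.Perm (Fin n)) : ℕ :=
  (Finset.univ.filter (fun p : Fin n × Fin n =>
    p.1 < p.2 ∧ σ p.2 < σ p.1)).card

open Finset

/-!
For a pair `i < j` write `a = σ i`, `b = σ j`. Sorting the inversions `b < a` by the position of
`a` and `b` relative to `i` and `j` gives `A_σ`, `B_σ`, `A_{σ⁻¹}`, the pairs `b < j = a`, and two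
further families: a deficiency `j` lying under the excedance arc `i ↦ a`, and a weak excedance `i`
whose value `a` is passed leftwards by the arc `j ↦ b`. Both are counted fibrewise over a cut point
(`j`, resp. `a`), and across every cut `σ` moves as many points rightwards as leftwards. Exchanging
the two directions turns the first family into `A_{σ⁻¹} + C_{σ⁻¹}` plus the double descents, and
the second into `A_σ + B_σ + C_σ` plus the pairs `j = a < b` (its crossings appear with the two
arcs exchanged). The pairs with `a = j` are exactly the excedances.
-/

namespace Equiv.Perm

variable {α : Type*} [Fintype α]

theorem card_filter_and_not_apply_eq (σ : Perm α) (p : α → Prop) [DecidablePred p] :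
    #{x | p x ∧ ¬p (σ x)} = #{x | p (σ x) ∧ ¬p x} := by
  classical
  rw [filter_and_not, filter_and_not]
  exact card_sdiff_comm (card_equiv σ.symm (by simp))

variable [LinearOrder α] (σ : Perm α)

theorem card_filter_le_lt_apply_eq (k : α) :
    #{x | x ≤ k ∧ k < σ x} = #{x | σ x ≤ k ∧ k < x} := by
  simpa only [not_le] using σ.card_filter_and_not_apply_eq (· ≤ k)

theorem card_prod_le_lt_apply_eq (w : α → Prop) [DecidablePred w] (c : α → α) :
    #{p : α × α | w p.2 ∧ p.1 ≤ c p.2 ∧ c p.2 < σ p.1}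
      = #{p : α × α | w p.1 ∧ σ p.2 ≤ c p.1 ∧ c p.1 < p.2} := by
  rw [card_filter, card_filter, Fintype.sum_prod_type_right, Fintype.sum_prod_type]
  refine sum_congr rfl fun k _ => ?_
  by_cases hk : w k
  · simpa only [hk, true_and, ← card_filter] using σ.card_filter_le_lt_apply_eq (c k)
  · simp [hk]

theorem card_inversions_eq :
    #{p : α × α | p.1 < p.2 ∧ σ p.2 < σ p.1}
      = #{p : α × α | p.1 < p.2 ∧ p.2 < σ p.2 ∧ σ p.2 < σ p.1}
      + #{p : α × α | p.1 < p.2 ∧ σ p.2 = p.2 ∧ p.2 < σ p.1}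
      + #{p : α × α | σ p.2 < σ p.1 ∧ σ p.1 < p.1 ∧ p.1 < p.2}
      + #{p : α × α | p.1 < p.2 ∧ p.2 < σ p.1 ∧ σ p.2 < p.2}
      + #{p : α × α | p.1 < p.2 ∧ σ p.1 = p.2 ∧ σ p.2 < p.2}
      + #{p : α × α | p.1 ≤ σ p.1 ∧ σ p.1 < p.2 ∧ σ p.2 < σ p.1} := by
  simp only [card_filter, ← sum_add_distrib]
  refine sum_congr rfl fun p _ => ?_
  have := σ.injective.eq_iff (a := p.1) (b := p.2)
  split_ifs <;> grind

theorem card_excedances_eq :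
    #{i | i < σ i}
      = #{p : α × α | p.1 < p.2 ∧ σ p.1 = p.2 ∧ σ p.2 < p.2}
      + #{p : α × α | p.1 < p.2 ∧ σ p.1 = p.2 ∧ p.2 < σ p.2} := by
  have hgraph : #{i | i < σ i} = #{p : α × α | p.1 < p.2 ∧ σ p.1 = p.2} :=
    card_nbij' (fun i => (i, σ i)) Prod.fst (by intro; simp) (by intro; simp; grind)
      (by intro; simp) (by intro; simp; grind)
  rw [hgraph]
  simp only [card_filter, ← sum_add_distrib]
  refine sum_congr rfl fun p _ => ?_
  have := σ.injective.eq_iff (a := p.1) (b := p.2)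
  split_ifs <;> grind

theorem card_double_descents_eq :
    #{i | σ (σ i) < σ i ∧ σ i < i} = #{p : α × α | σ p.1 < p.1 ∧ p.1 < p.2 ∧ σ p.2 = p.1} :=
  card_nbij' (fun i => (σ i, i)) Prod.snd (by intro; simp) (by intro; simp; grind)
    (by intro; simp) (by intro; simp; grind)

theorem card_inv_nestings_eq :
    #{p : α × α | p.1 < p.2 ∧ p.2 < σ⁻¹ p.2 ∧ σ⁻¹ p.2 < σ⁻¹ p.1}
      = #{p : α × α | σ p.2 < σ p.1 ∧ σ p.1 < p.1 ∧ p.1 < p.2} :=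
  card_equiv ((σ⁻¹.prodCongr σ⁻¹).trans (Equiv.prodComm α α)) (by simp)

theorem card_inv_crossings_eq :
    #{p : α × α | p.1 < p.2 ∧ p.2 < σ⁻¹ p.1 ∧ σ⁻¹ p.1 < σ⁻¹ p.2}
      = #{p : α × α | σ p.1 < σ p.2 ∧ σ p.2 < p.1 ∧ p.1 < p.2} :=
  card_equiv (σ⁻¹.prodCongr σ⁻¹) (by simp)

theorem card_deficiency_under_excedance_eq :
    #{p : α × α | p.1 < p.2 ∧ p.2 < σ p.1 ∧ σ p.2 < p.2}
      = #{p : α × α | σ p.2 < σ p.1 ∧ σ p.1 < p.1 ∧ p.1 < p.2}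
      + #{p : α × α | σ p.1 < σ p.2 ∧ σ p.2 < p.1 ∧ p.1 < p.2}
      + #{p : α × α | σ p.1 < p.1 ∧ p.1 < p.2 ∧ σ p.2 = p.1} := by
  calc _ = #{p : α × α | σ p.2 < p.2 ∧ p.1 ≤ p.2 ∧ p.2 < σ p.1} := by
        congr 1; ext p; simp only [mem_filter, mem_univ, true_and]; grind
    _ = #{p : α × α | σ p.1 < p.1 ∧ σ p.2 ≤ p.1 ∧ p.1 < p.2} :=
        σ.card_prod_le_lt_apply_eq (fun k => σ k < k) id
    _ = _ := by
        simp only [card_filter, ← sum_add_distrib]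
        refine sum_congr rfl fun p _ => ?_
        have := σ.injective.eq_iff (a := p.1) (b := p.2)
        split_ifs <;> grind

theorem card_left_arc_over_weak_excedance_eq :
    #{p : α × α | p.1 ≤ σ p.1 ∧ σ p.1 < p.2 ∧ σ p.2 < σ p.1}
      = #{p : α × α | p.1 < p.2 ∧ p.2 < σ p.2 ∧ σ p.2 < σ p.1}
      + #{p : α × α | p.1 < p.2 ∧ σ p.2 = p.2 ∧ p.2 < σ p.1}
      + #{p : α × α | p.1 < p.2 ∧ p.2 < σ p.1 ∧ σ p.1 < σ p.2}
      + #{p : α × α | p.1 < p.2 ∧ σ p.1 = p.2 ∧ p.2 < σ p.2} := by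
  have hswap : #{p : α × α | p.2 < p.1 ∧ p.1 ≤ σ p.2 ∧ σ p.2 < σ p.1}
      = #{p : α × α | p.1 < p.2 ∧ p.2 ≤ σ p.1 ∧ σ p.1 < σ p.2} :=
    card_equiv (Equiv.prodComm α α) (by simp)
  have hcross : #{p : α × α | p.1 < p.2 ∧ p.2 ≤ σ p.1 ∧ σ p.1 < σ p.2}
      = #{p : α × α | p.1 < p.2 ∧ p.2 < σ p.1 ∧ σ p.1 < σ p.2}
      + #{p : α × α | p.1 < p.2 ∧ σ p.1 = p.2 ∧ p.2 < σ p.2} := by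
    simp only [card_filter, ← sum_add_distrib]
    refine sum_congr rfl fun p _ => ?_
    split_ifs <;> grind
  calc _ = #{p : α × α | p.1 ≤ σ p.1 ∧ σ p.2 ≤ σ p.1 ∧ σ p.1 < p.2} := by
        congr 1; ext p; simp only [mem_filter, mem_univ, true_and]
        have := σ.injective.eq_iff (a := p.1) (b := p.2)
        grind
    _ = #{p : α × α | p.2 ≤ σ p.2 ∧ p.1 ≤ σ p.2 ∧ σ p.2 < σ p.1} :=
        (σ.card_prod_le_lt_apply_eq (fun k => k ≤ σ k) σ).symm
    _ = #{p : α × α | p.1 < p.2 ∧ p.2 < σ p.2 ∧ σ p.2 < σ p.1}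
        + #{p : α × α | p.1 < p.2 ∧ σ p.2 = p.2 ∧ p.2 < σ p.1}
        + #{p : α × α | p.2 < p.1 ∧ p.1 ≤ σ p.2 ∧ σ p.2 < σ p.1} := by
        simp only [card_filter, ← sum_add_distrib]
        refine sum_congr rfl fun p _ => ?_
        have := σ.injective.eq_iff (a := p.1) (b := p.2)
        split_ifs <;> grind
    _ = _ := by rw [hswap, hcross, ← add_assoc]

end Equiv.Perm

theorem inv_eq_invMT_general (g : ℕ) (σ : Equiv.Perm (Fin g)) :
    invCnt σ = 2 * (Acnt σ + Acnt σ⁻¹ + Bcnt σ) + Ccnt σ + Ccnt σ⁻¹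
      + (Finset.univ.filter (fun i : Fin g => i < σ i)).card
      + (Finset.univ.filter (fun i : Fin g => σ (σ i) < σ i ∧ σ i < i)).card := by
  rw [invCnt, Acnt, Acnt, Bcnt, Ccnt, Ccnt, σ.card_inversions_eq, σ.card_excedances_eq,
    σ.card_double_descents_eq, σ.card_inv_nestings_eq, σ.card_inv_crossings_eq,
    σ.card_deficiency_under_excedance_eq, σ.card_left_arc_over_weak_excedance_eq]
  ring

/-- (Clarke–Steingrímsson–Zeng)
`ℓ(σ) = 2(A_σ + A_{σ⁻¹} + B_σ) + C_σ + C_{σ⁻¹} + #{i : i < σ(i)}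
 + #{i : σ(σ(i)) < σ(i) < i}`. -/
theorem inv_eq_invMT (g : ℕ) (hg : 1 ≤ g) (σ : Equiv.Perm (Fin g)) :
    invCnt σ = 2 * (Acnt σ + Acnt σ⁻¹ + Bcnt σ) + Ccnt σ + Ccnt σ⁻¹
      + (Finset.univ.filter (fun i : Fin g => i < σ i)).card
      + (Finset.univ.filter (fun i : Fin g => σ (σ i) < σ i ∧ σ i < i)).card :=
  inv_eq_invMT_general g σ
end

section
/- For every positive integer g and every permutation σ of {1,…,g}, 2·ℓ(σ) ≥ 4·(A_σ + A_{σ⁻¹} + B_σ) + #{i ∈ {1,…,g} : σ(i) ≠ i}. -/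
open Finset

namespace Finset
variable {α β : Type*} [Fintype α] [Fintype β]

theorem card_filter_prod_eq_sum_fst (P : α × β → Prop) [DecidablePred P] :
    #{p | P p} = ∑ a, #{b | P (a, b)} := by
  simp only [card_filter, ← univ_product_univ, sum_product]

theorem card_filter_prod_eq_sum_snd (P : α × β → Prop) [DecidablePred P] :
    #{p | P p} = ∑ b, #{a | P (a, b)} := by
  simp only [card_filter, ← univ_product_univ, sum_product_right]

theorem card_filter_le_and_lt_eq_zero [LinearOrder α] {a b : α} (h : b ≤ a) :
    #{x | a ≤ x ∧ x < b} = 0 :=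
  card_eq_zero.2 <| filter_eq_empty_iff.2 fun _ _ hx => hx.2.not_ge (h.trans hx.1)

end Finset

namespace Equiv.Perm
variable {α : Type*} [Fintype α]

theorem card_filter_comp (σ : Perm α) (p : α → Prop) [DecidablePred p] :
    #{x | p (σ x)} = #{x | p x} :=
  card_equiv σ (by simp)

theorem card_filter_and_apply_not (σ : Perm α) (p : α → Prop) [DecidablePred p] :
    #{x | p x ∧ ¬ p (σ x)} = #{x | ¬ p x ∧ p (σ x)} := by
  classical
  convert card_sdiff_comm (σ.card_filter_comp p).symm using 2 <;> ext <;> simp [and_comm]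

variable [LinearOrder α]

theorem card_gt_apply_lt_eq_of_le_apply (σ : Perm α) {r : α} (hr : r ≤ σ r) :
    #{x | r < x ∧ σ x < σ r} = #{x | r ≤ x ∧ x < σ r} + #{x | x < r ∧ σ r < σ x} := by
  have h₁ : #{x | σ x < σ r} + #{x | x < r ∧ σ r < σ x} =
      #{x | r < x ∧ σ x < σ r} + #{x | x < r} := by
    simp only [card_filter, ← sum_add_distrib]
    refine sum_congr rfl fun x _ => ?_
    have hinj := σ.injective.eq_iff (a := x) (b := r)
    split_ifs <;> grind
  have h₂ : #{x | x < σ r} = #{x | x < r} + #{x | r ≤ x ∧ x < σ r} := by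
    simp only [card_filter, ← sum_add_distrib]
    refine sum_congr rfl fun x _ => ?_
    split_ifs <;> grind
  have h₃ := σ.card_filter_comp (· < σ r)
  omega

theorem card_gt_apply_lt_le_of_apply_lt (σ : Perm α) {e : α} (he : σ e < e) :
    #{x | e < x ∧ σ x < σ e} ≤ #{x | x < e ∧ e < σ x} :=
  calc #{x | e < x ∧ σ x < σ e}
      ≤ #{x | ¬ x ≤ e ∧ σ x ≤ e} := by
        gcongr with x <;> grind
    _ = #{x | x ≤ e ∧ ¬ σ x ≤ e} := (σ.card_filter_and_apply_not (· ≤ e)).symm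
    _ = #{x | x < e ∧ e < σ x} := by
        congr 1
        refine filter_congr fun x _ => ?_
        grind

end Equiv.Perm

/-- `∑_{r < σ r} (σ r - r)`: the total distance travelled by the points that `σ` moves up. -/
def rightDisp {n : ℕ} (σ : Equiv.Perm (Fin n)) : ℕ :=
  #{p : Fin n × Fin n | p.1 ≤ p.2 ∧ p.2 < σ p.1}

section Counts
variable {n : ℕ} (σ : Equiv.Perm (Fin n))

theorem Acnt_add_Bcnt :
    Acnt σ + Bcnt σ = #{p : Fin n × Fin n | p.1 < p.2 ∧ p.2 ≤ σ p.2 ∧ σ p.2 < σ p.1} := by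
  simp only [Acnt, Bcnt, card_filter, ← sum_add_distrib]
  refine sum_congr rfl fun p _ => ?_
  split_ifs <;> grind

theorem card_inversions_of_le_apply :
    #{p : Fin n × Fin n | p.1 < p.2 ∧ σ p.2 < σ p.1 ∧ p.1 ≤ σ p.1}
      = rightDisp σ + (Acnt σ + Bcnt σ) := by
  rw [Acnt_add_Bcnt, rightDisp, card_filter_prod_eq_sum_fst, card_filter_prod_eq_sum_fst,
    card_filter_prod_eq_sum_snd, ← sum_add_distrib]
  refine sum_congr rfl fun r _ => ?_
  by_cases hr : r ≤ σ r
  · simp only [hr, and_true, true_and]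
    exact σ.card_gt_apply_lt_eq_of_le_apply hr
  · simp [hr, card_filter_le_and_lt_eq_zero (not_le.1 hr).le]

theorem card_inversions_of_apply_lt :
    #{p : Fin n × Fin n | p.1 < p.2 ∧ σ p.2 < σ p.1 ∧ σ p.1 < p.1} = Acnt σ⁻¹ :=
  card_equiv ((Equiv.prodComm _ _).trans (σ.prodCongr σ)) fun p => by
    simp only [mem_filter, mem_univ, true_and, Equiv.Perm.coe_inv, Equiv.trans_apply,
      Equiv.prodComm_apply, Equiv.prodCongr_apply, Prod.map_fst, Prod.fst_swap, Prod.map_snd,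
      Prod.snd_swap, Equiv.symm_apply_apply]
    grind

theorem invCnt_eq_rightDisp_add : invCnt σ = rightDisp σ + Acnt σ + Acnt σ⁻¹ + Bcnt σ := by
  have h := card_filter_add_card_filter_not
    (s := {p : Fin n × Fin n | p.1 < p.2 ∧ σ p.2 < σ p.1}) (fun p => p.1 ≤ σ p.1)
  simp only [filter_filter, not_le, and_assoc] at h
  rw [card_inversions_of_le_apply, card_inversions_of_apply_lt] at h
  rw [invCnt, ← h]
  ring

theorem Acnt_inv_le :
    Acnt σ⁻¹ ≤ #{p : Fin n × Fin n | (p.1 < p.2 ∧ p.2 < σ p.1) ∧ σ p.2 < p.2} := by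
  rw [← card_inversions_of_apply_lt, card_filter_prod_eq_sum_fst, card_filter_prod_eq_sum_snd]
  refine sum_le_sum fun e _ => ?_
  by_cases he : σ e < e
  · simp only [he, and_true]
    exact σ.card_gt_apply_lt_le_of_apply_lt he
  · simp [he]

theorem card_lt_apply_add_le_rightDisp :
    #{i | i < σ i} + Acnt σ + Bcnt σ + Acnt σ⁻¹ ≤ rightDisp σ := by
  have hdiag : #{i | i < σ i} = #{p : Fin n × Fin n | p.2 = p.1 ∧ p.1 < σ p.1} :=
    card_nbij' (fun i => (i, i)) Prod.fst (by intro i; simp) (by intro p; simp)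
      (by intro i; simp) fun p => by
        simp only [coe_filter, mem_univ, true_and, Set.mem_ofPred_eq]
        grind
  have hsplit : #{p : Fin n × Fin n | p.2 = p.1 ∧ p.1 < σ p.1} + (Acnt σ + Bcnt σ)
      + #{p : Fin n × Fin n | (p.1 < p.2 ∧ p.2 < σ p.1) ∧ σ p.2 < p.2} ≤ rightDisp σ := by
    simp only [Acnt_add_Bcnt, rightDisp, card_filter, ← sum_add_distrib]
    refine sum_le_sum fun p _ => ?_
    split_ifs <;> grind
  have := Acnt_inv_le σ
  omega

theorem invCnt_inv : invCnt σ⁻¹ = invCnt σ :=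
  card_equiv ((Equiv.prodComm _ _).trans (σ.prodCongr σ)).symm fun p => by
    simp only [Equiv.Perm.coe_inv, mem_filter, mem_univ, true_and, Equiv.symm_trans,
      Equiv.prodCongr_symm, Equiv.prodComm_symm, Equiv.trans_apply, Equiv.prodCongr_apply,
      Equiv.prodComm_apply, Prod.fst_swap, Prod.map_snd, Prod.snd_swap, Prod.map_fst,
      Equiv.apply_symm_apply]
    grind

theorem Bcnt_inv : Bcnt σ⁻¹ = Bcnt σ := by
  rw [Bcnt, Bcnt, card_filter_prod_eq_sum_snd, card_filter_prod_eq_sum_snd]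
  refine sum_congr rfl fun f _ => ?_
  by_cases hf : σ f = f
  · have hf' : σ⁻¹ f = f := by rw [Equiv.Perm.inv_eq_iff_eq, hf]
    have hreindex := σ.card_filter_comp fun i => i < f ∧ f < σ⁻¹ i
    have h := σ.card_gt_apply_lt_eq_of_le_apply hf.ge
    simp only [hf, hf', Equiv.Perm.coe_inv, Equiv.symm_apply_apply, true_and] at hreindex h ⊢
    rw [card_filter_le_and_lt_eq_zero le_rfl, zero_add] at h
    rw [← h, ← hreindex]
    simp only [and_comm]
  · have hf' : σ⁻¹ f ≠ f := by rwa [ne_eq, Equiv.Perm.inv_eq_iff_eq, eq_comm]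
    simp only [hf, hf', false_and, and_false, filter_false, card_empty]

theorem card_lt_inv_apply : #{i | i < σ⁻¹ i} = #{i | σ i < i} := by
  simpa using (σ.card_filter_comp fun i => i < σ⁻¹ i).symm

theorem card_apply_ne : #{i | σ i ≠ i} = #{i | i < σ i} + #{i | σ i < i} := by
  simp only [card_filter, ← sum_add_distrib]
  refine sum_congr rfl fun i _ => ?_
  split_ifs <;> grind

end Counts

theorem two_inv_ge_general (g : ℕ) (σ : Equiv.Perm (Fin g)) :
    2 * invCnt σ ≥ 4 * (Acnt σ + Acnt σ⁻¹ + Bcnt σ)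
      + (Finset.univ.filter (fun i : Fin g => σ i ≠ i)).card := by
  have hσ := invCnt_eq_rightDisp_add σ
  have hσ' := invCnt_eq_rightDisp_add σ⁻¹
  have hD := card_lt_apply_add_le_rightDisp σ
  have hD' := card_lt_apply_add_le_rightDisp σ⁻¹
  rw [inv_inv, invCnt_inv, Bcnt_inv] at hσ'
  rw [inv_inv, Bcnt_inv, card_lt_inv_apply] at hD'
  have hmoved := card_apply_ne σ
  omega

/-- `2ℓ(σ) ≥ 4(A_σ + A_{σ⁻¹} + B_σ) + #{i : σ(i) ≠ i}`. -/
theorem two_inv_ge (g : ℕ) (hg : 1 ≤ g) (σ : Equiv.Perm (Fin g)) :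
    2 * invCnt σ ≥ 4 * (Acnt σ + Acnt σ⁻¹ + Bcnt σ)
      + (Finset.univ.filter (fun i : Fin g => σ i ≠ i)).card :=
  two_inv_ge_general g σ
end
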